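/- arXiv:2511.04241 — 4 statements merged into one kernel-verified Lean document; each statement's English description precedes it below -/
import Mathlib

section
/- Let (X,d) be a metric space, let A, B, C ∈ X be three distinct points, and let γ be a geodesic from A to C. Set R = d(A,B) and let D > 0 be such that dist(B, γ) ≤ D, R ≥ 4D, and d(A,C) ≥ R + 4D. Let L_1, L_2 ⊆ X be finite sets such that: (1) every point of L_1 ∪ L_2 is at distance at most D from the image of γ; (2) d(A,x) ≤ R + 4D for every x ∈ L_1 and d(A,y) ≥ R − 4D for every y ∈ L_2. Let N be the number of points x ∈ L_1 ∪ L_2 with R − 4D ≤ d(A,x) ≤ R + 4D. Then for every finite set L_3 with L_1 △ L_2 ⊆ L_3 ⊆ L_1 ∪ L_2 one has 0 ≤ TSP(A, L_1, B) + TSP(B, L_2, C) − TSP(A, L_3, C) ≤ 24(N+1)D. -/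
/-!
Project each point `x` within `D` of `γ` to a nearest point `γ (τ x)`. On this neighbourhood the
coordinate `τ` distorts distances by at most `2D`, and `|d(A,x) - τ x| ≤ D`.

The lower bound is concatenation: an `A → L₁ → B` tour followed by a `B → L₂ → C` tour covers
`L₃`. For the upper bound, take an optimal `A → L₃ → C` tour and drop the points of the annulus
`R - 4D ≤ d(A,·) ≤ R + 4D`. Every remaining point is low (`τ ≤ R - 3D`) or high (`τ ≥ R + 3D`).
Since the gap `6D` is three times the distortion, moving a block of low points in front of the
block of high points preceding it never lengthens a tour, so the tour may be taken to visit all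
low points first. Splitting it between the two halves and splicing in a detour through the
annulus points, `B`, and the annulus points again gives a tour for `L₁` ending at `B` and one for
`L₂` starting at `B`: the points of `L₁` below the annulus and of `L₂` above it lie in
`L₁ ∆ L₂ ⊆ L₃`. The `2N + 1` detour points have `τ` within `5D` of `R`, so they are pairwise
`12D`-close, and the detour costs at most `24 (N + 1) D`.
-/

open Metric

/-- The length of the piecewise geodesic route that starts at `A`, visits the points of the
list in order, and ends at `B`. -/
noncomputable def routeLength {X : Type*} [MetricSpace X] : X → X → List X → ℝ
  | A, B, [] => dist A B
  | A, B, x :: xs => dist A x + routeLength x B xs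

/-- The Traveling Salesman Problem `TSP(A, L, B)`: the minimal length of a piecewise geodesic
path starting at `A`, visiting every point of the finite set `L`, and ending at `B`
(the minimum over all orderings of `L`); in particular `TSP(A, ∅, B) = d(A,B)`. -/
noncomputable def TSP {X : Type*} [MetricSpace X] [DecidableEq X] (A : X) (L : Finset X) (B : X) : ℝ :=
  sInf (routeLength A B '' {l : List X | l.Nodup ∧ l.toFinset = L})

open scoped symmDiff

lemma List.headD_mem_cons {α : Type*} {l : List α} {b : α} : l.headD b ∈ b :: l := by
  cases l <;> simp

section

variable {X : Type*} [MetricSpace X]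

@[simp]
lemma routeLength_nil (a b : X) : routeLength a b [] = dist a b := rfl

@[simp]
lemma routeLength_cons (a b x : X) (l : List X) :
    routeLength a b (x :: l) = dist a x + routeLength x b l := rfl

lemma routeLength_nonneg (a b : X) (l : List X) : 0 ≤ routeLength a b l := by
  induction l generalizing a with
  | nil => exact dist_nonneg
  | cons x l ih => exact add_nonneg dist_nonneg (ih x)

lemma routeLength_le_dist_add (a c b : X) (l : List X) :
    routeLength a b l ≤ dist a c + routeLength c b l := by
  cases l with
  | nil => exact dist_triangle a c b
  | cons x l =>
    simp only [routeLength_cons, ← add_assoc]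
    gcongr
    exact dist_triangle a c x

lemma routeLength_mono {s l : List X} (h : s.Sublist l) (a b : X) :
    routeLength a b s ≤ routeLength a b l := by
  induction h generalizing a with
  | slnil => exact le_rfl
  | cons x _ ih => exact (ih a).trans (routeLength_le_dist_add a x b _)
  | cons_cons x _ ih => simpa using ih x

lemma routeLength_append_cons (a b x : X) (l r : List X) :
    routeLength a b (l ++ x :: r) = routeLength a x l + routeLength x b r := by
  induction l generalizing a with
  | nil => rfl
  | cons y l ih => simp [ih, add_assoc]

lemma routeLength_append (a b : X) (l r : List X) :
    routeLength a b (l ++ r) =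
      routeLength a (l.getLastD a) l + routeLength (l.getLastD a) b r := by
  induction l generalizing a with
  | nil => simp
  | cons y l ih => simp only [List.cons_append, routeLength_cons, List.getLastD_cons, ih, add_assoc]

lemma routeLength_append_eq_headD (a b : X) (l r : List X) :
    routeLength a b (l ++ r) =
      routeLength a (r.headD b) l + routeLength (r.headD b) b r.tail := by
  cases r with
  | nil => simp
  | cons x r => exact routeLength_append_cons a b x l r

lemma routeLength_eq_dist_headD_add (a b : X) (r : List X) :
    routeLength a b r = dist a (r.headD b) + routeLength (r.headD b) b r.tail := by
  simpa using routeLength_append_eq_headD a b [] r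

lemma routeLength_append_append (a b : X) (l K r : List X) :
    routeLength a b (l ++ K ++ r) = routeLength a b (l ++ r) +
      (routeLength (l.getLastD a) (r.headD b) K - dist (l.getLastD a) (r.headD b)) := by
  rw [List.append_assoc, routeLength_append, routeLength_append_eq_headD, routeLength_append,
    routeLength_eq_dist_headD_add _ b r]
  ring

lemma routeLength_le_of_forall_dist_le {S : Set X} {ρ α β : ℝ}
    (hS : ∀ x ∈ S, ∀ y ∈ S, dist x y ≤ ρ) {u w : X} (hu : ∀ x ∈ S, dist u x ≤ α)
    (hw : ∀ x ∈ S, dist x w ≤ β) {K : List X} (hK : ∀ x ∈ K, x ∈ S) (hne : K ≠ []) :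
    routeLength u w K ≤ α + ρ * (K.length - 1) + β := by
  induction K generalizing u α with
  | nil => exact absurd rfl hne
  | cons m K ih =>
    have hm : m ∈ S := hK m (by simp)
    rcases eq_or_ne K [] with rfl | hK'
    · simpa using add_le_add (hu m hm) (hw m hm)
    have := ih (hS m hm) (fun x hx => hK x (by simp [hx])) hK'
    simp only [routeLength_cons, List.length_cons, Nat.cast_add, Nat.cast_one]
    linarith [hu m hm]

lemma TSP_le_routeLength [DecidableEq X] {L : Finset X} {l : List X} (h : L ⊆ l.toFinset)
    (A B : X) :
    TSP A L B ≤ routeLength A B l := by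
  set s := l.dedup.filter (· ∈ L)
  have hs : s.toFinset = L := by
    ext x
    simp only [s, List.mem_toFinset, List.mem_filter, List.mem_dedup, decide_eq_true_eq,
      and_iff_right_iff_imp]
    exact fun hx => List.mem_toFinset.1 (h hx)
  calc TSP A L B ≤ routeLength A B s :=
        csInf_le ⟨0, by rintro _ ⟨l, -, rfl⟩; exact routeLength_nonneg A B l⟩
          ⟨s, ⟨l.nodup_dedup.filter _, hs⟩, rfl⟩
    _ ≤ routeLength A B l := routeLength_mono (List.filter_sublist.trans l.dedup_sublist) A B

lemma exists_routeLength_eq_TSP [DecidableEq X] (A B : X) (L : Finset X) :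
    ∃ l : List X, l.toFinset = L ∧ routeLength A B l = TSP A L B := by
  set routes := {l : List X | l.Nodup ∧ l.toFinset = L}
  have hfin : routes.Finite := by
    refine L.toList.permutations.finite_toSet.subset fun l ⟨hl, hlL⟩ => ?_
    rw [Set.mem_ofPred_eq, List.mem_permutations, List.perm_ext_iff_of_nodup hl L.nodup_toList]
    simp [← hlL]
  have hne : routes.Nonempty := ⟨L.toList, L.nodup_toList, L.toList_toFinset⟩
  obtain ⟨l, ⟨-, hl⟩, hmin⟩ := (hne.image (routeLength A B)).csInf_mem (hfin.image _)
  exact ⟨l, hl, hmin⟩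

lemma TSP_le_TSP_add_TSP [DecidableEq X] {L₁ L₂ L₃ : Finset X} (h : L₃ ⊆ L₁ ∪ L₂) (A B C : X) :
    TSP A L₃ C ≤ TSP A L₁ B + TSP B L₂ C := by
  obtain ⟨l₁, hl₁, hlen₁⟩ := exists_routeLength_eq_TSP A B L₁
  obtain ⟨l₂, hl₂, hlen₂⟩ := exists_routeLength_eq_TSP B C L₂
  have hcover : L₃ ⊆ (l₁ ++ B :: l₂).toFinset := by
    rw [List.toFinset_append, List.toFinset_cons, hl₁, hl₂]
    exact h.trans (Finset.union_subset_union subset_rfl (Finset.subset_insert B L₂))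
  calc TSP A L₃ C ≤ routeLength A C (l₁ ++ B :: l₂) := TSP_le_routeLength hcover A C
    _ = TSP A L₁ B + TSP B L₂ C := by rw [routeLength_append_cons, hlen₁, hlen₂]

lemma TSP_add_TSP_le_routeLength_splice [DecidableEq X] {L₁ L₂ : Finset X} {σ₁ σ₂ M₁ M₂ : List X}
    (h₁ : L₁ ⊆ (σ₁ ++ M₁).toFinset) (h₂ : L₂ ⊆ (M₂ ++ σ₂).toFinset) (A B C : X) :
    TSP A L₁ B + TSP B L₂ C ≤ routeLength A C (σ₁ ++ σ₂) +
      (routeLength (σ₁.getLastD A) (σ₂.headD C) (M₁ ++ B :: M₂) -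
        dist (σ₁.getLastD A) (σ₂.headD C)) := by
  calc TSP A L₁ B + TSP B L₂ C ≤ routeLength A B (σ₁ ++ M₁) + routeLength B C (M₂ ++ σ₂) :=
        add_le_add (TSP_le_routeLength h₁ A B) (TSP_le_routeLength h₂ B C)
    _ = _ := by
        rw [← routeLength_append_append, ← routeLength_append_cons]
        simp

/-- A route `x → h ⋯ e → y ⋯ f → z` that crosses between `Lo` and `Hi` three times is no shorter
than the route `x → y ⋯ f → h ⋯ e → z` that crosses once. -/
def Uncrossable (Lo Hi : Set X) : Prop :=
  ∀ x ∈ Lo, ∀ y ∈ Lo, ∀ f ∈ Lo, ∀ h ∈ Hi, ∀ e ∈ Hi, ∀ z ∈ Hi,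
    dist x y + dist f h + dist e z ≤ dist x h + dist e y + dist f z

namespace Uncrossable

variable {Lo Hi : Set X}

lemma routeLength_swap_le (hLH : Uncrossable Lo Hi) {a b : X} (ha : a ∈ Lo)
    {H Y S : List X} (hH : ∀ x ∈ H, x ∈ Hi) (hY : ∀ x ∈ Y, x ∈ Lo) (hS : S.headD b ∈ Hi) :
    routeLength a b (Y ++ H ++ S) ≤ routeLength a b (H ++ Y ++ S) := by
  obtain _ | ⟨h, H⟩ := H
  · simp
  obtain _ | ⟨y, Y⟩ := Y
  · simp
  have he : H.getLastD h ∈ Hi := hH _ List.getLastD_mem_cons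
  have hf : Y.getLastD y ∈ Lo := hY _ List.getLastD_mem_cons
  have := hLH a ha y (hY y (by simp)) _ hf h (hH h (by simp)) _ he _ hS
  simp only [List.cons_append, List.append_assoc, routeLength_cons, routeLength_append]
  rw [routeLength_eq_dist_headD_add (H.getLastD h), routeLength_eq_dist_headD_add (Y.getLastD y)]
  linarith

lemma routeLength_append_filter_le (hLH : Uncrossable Lo Hi) [DecidablePred (· ∈ Lo)] {b : X}
    (hb : b ∈ Hi) {l : List X} (hl : ∀ x ∈ l, x ∈ Lo ∨ x ∈ Hi) {a : X} (ha : a ∈ Lo)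
    {H Y : List X} (hH : ∀ x ∈ H, x ∈ Hi) (hY : ∀ x ∈ Y, x ∈ Lo) :
    routeLength a b (Y ++ l.filter (· ∈ Lo) ++ H ++ l.filter (· ∉ Lo)) ≤
      routeLength a b (H ++ Y ++ l) := by
  induction l generalizing a H Y with
  | nil => simpa using hLH.routeLength_swap_le ha hH hY (S := []) hb
  | cons x l ih =>
    have hl' : ∀ y ∈ l, y ∈ Lo ∨ y ∈ Hi := fun y hy => hl y (List.mem_cons_of_mem x hy)
    by_cases hxLo : x ∈ Lo
    · have hYx : ∀ y ∈ Y ++ [x], y ∈ Lo := by simpa [or_imp, forall_and] using ⟨hY, hxLo⟩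
      simpa [hxLo] using ih hl' ha hH hYx
    have hxHi : x ∈ Hi := (hl x List.mem_cons_self).resolve_left hxLo
    have hHx : ∀ y ∈ H ++ [x], y ∈ Hi := by simpa [or_imp, forall_and] using ⟨hH, hxHi⟩
    have hu : Y.getLastD a ∈ Lo := (List.mem_cons.1 List.getLastD_mem_cons).elim (· ▸ ha) (hY _)
    calc routeLength a b (Y ++ (x :: l).filter (· ∈ Lo) ++ H ++ (x :: l).filter (· ∉ Lo))
        = routeLength a (Y.getLastD a) Y + routeLength (Y.getLastD a) b
            ([] ++ l.filter (· ∈ Lo) ++ (H ++ [x]) ++ l.filter (· ∉ Lo)) := by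
          simp [hxLo, routeLength_append a b Y]
      _ ≤ routeLength a (Y.getLastD a) Y + routeLength (Y.getLastD a) b (H ++ [x] ++ [] ++ l) := by
          gcongr
          exact ih hl' hu hHx (by simp)
      _ = routeLength a b (Y ++ H ++ x :: l) := by simp [routeLength_append a b Y]
      _ ≤ routeLength a b (H ++ Y ++ x :: l) := hLH.routeLength_swap_le ha hH hY hxHi

lemma routeLength_filter_append_filter_le (hLH : Uncrossable Lo Hi) [DecidablePred (· ∈ Lo)]
    {a b : X} (ha : a ∈ Lo) (hb : b ∈ Hi) {l : List X} (hl : ∀ x ∈ l, x ∈ Lo ∨ x ∈ Hi) :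
    routeLength a b (l.filter (· ∈ Lo) ++ l.filter (· ∉ Lo)) ≤ routeLength a b l := by
  simpa using hLH.routeLength_append_filter_le hb hl ha (H := []) (Y := []) (by simp) (by simp)

lemma exists_routeLength_append_le_TSP [DecidableEq X] (hLH : Uncrossable Lo Hi)
    (hdisj : Disjoint Lo Hi) {a b : X} (ha : a ∈ Lo) (hb : b ∈ Hi) (L : Finset X) :
    ∃ σ₁ σ₂ : List X, (∀ x ∈ σ₁, x ∈ Lo) ∧ (∀ x ∈ σ₂, x ∈ Hi) ∧
      (∀ x ∈ L, x ∈ Lo → x ∈ σ₁) ∧ (∀ x ∈ L, x ∈ Hi → x ∈ σ₂) ∧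
      routeLength a b (σ₁ ++ σ₂) ≤ TSP a L b := by
  classical
  obtain ⟨q, hq, hqlen⟩ := exists_routeLength_eq_TSP a b L
  set σ := q.filter fun x => x ∈ Lo ∨ x ∈ Hi
  have hσ : ∀ x ∈ σ, x ∈ Lo ∨ x ∈ Hi := fun x hx => by simpa using (List.mem_filter.1 hx).2
  refine ⟨σ.filter (· ∈ Lo), σ.filter (· ∉ Lo), fun x hx => ?_, fun x hx => ?_,
    fun x hx hxLo => ?_, fun x hx hxHi => ?_, ?_⟩
  · simpa using (List.mem_filter.1 hx).2
  · obtain ⟨hxσ, hxLo⟩ := List.mem_filter.1 hx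
    exact (hσ x hxσ).resolve_left (by simpa using hxLo)
  · simp [σ, List.mem_toFinset.1 (hq ▸ hx), hxLo]
  · simp [σ, List.mem_toFinset.1 (hq ▸ hx), hxHi, Set.disjoint_right.1 hdisj hxHi]
  · exact (hLH.routeLength_filter_append_filter_le ha hb hσ).trans
      ((routeLength_mono List.filter_sublist a b).trans hqlen.le)

end Uncrossable

section RoughCoordinate

variable {τ : X → ℝ} {G : Set X}

lemma uncrossable_of_abs_dist_sub_le {δ : ℝ}
    (hτ : ∀ x ∈ G, ∀ y ∈ G, |dist x y - dist (τ x) (τ y)| ≤ δ)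
    {lo hi : ℝ} (hgap : lo + 3 * δ ≤ hi) :
    Uncrossable {x ∈ G | τ x ≤ lo} {x ∈ G | hi ≤ τ x} := by
  simp only [Real.dist_eq] at hτ
  rintro x ⟨hx, hxτ⟩ y ⟨hy, hyτ⟩ f ⟨hf, hfτ⟩ h ⟨hh, hhτ⟩ e ⟨he, heτ⟩ z ⟨hz, hzτ⟩
  have hxy := abs_le.1 (hτ x hx y hy)
  have hfh := abs_le.1 (hτ f hf h hh)
  have hez := abs_le.1 (hτ e he z hz)
  have hxh := abs_le.1 (hτ x hx h hh)
  have hey := abs_le.1 (hτ e he y hy)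
  have hfz := abs_le.1 (hτ f hf z hz)
  rw [abs_of_nonpos (by linarith : τ f - τ h ≤ 0)] at hfh
  rw [abs_of_nonpos (by linarith : τ x - τ h ≤ 0)] at hxh
  rw [abs_of_nonneg (by linarith : 0 ≤ τ e - τ y)] at hey
  rw [abs_of_nonpos (by linarith : τ f - τ z ≤ 0)] at hfz
  cases abs_cases (τ x - τ y) <;> cases abs_cases (τ e - τ z) <;> linarith

lemma routeLength_le_of_abs_dist_sub_le {D c : ℝ} (hD : 0 ≤ D)
    (hτ : ∀ x ∈ G, ∀ y ∈ G, |dist x y - dist (τ x) (τ y)| ≤ 2 * D) {u w : X}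
    (hu : u ∈ G) (huc : τ u ≤ c - 3 * D) (hw : w ∈ G) (hwc : c + 3 * D ≤ τ w) {K : List X}
    (hK : ∀ x ∈ K, x ∈ G ∧ |τ x - c| ≤ 5 * D) (hne : K ≠ []) :
    routeLength u w K ≤ dist u w + 12 * D * K.length + 4 * D := by
  simp only [Real.dist_eq] at hτ
  set S := {x ∈ G | |τ x - c| ≤ 5 * D}
  have hdiam : ∀ x ∈ S, ∀ y ∈ S, dist x y ≤ 12 * D := by
    rintro x ⟨hx, hxc⟩ y ⟨hy, hyc⟩
    have := abs_le.1 (hτ x hx y hy)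
    have := abs_le.1 hxc
    have := abs_le.1 hyc
    cases abs_cases (τ x - τ y) <;> linarith
  have hfrom : ∀ x ∈ S, dist u x ≤ c + 7 * D - τ u := by
    rintro x ⟨hx, hxc⟩
    have := abs_le.1 (hτ u hu x hx)
    have := abs_le.1 hxc
    cases abs_cases (τ u - τ x) <;> linarith
  have hto : ∀ x ∈ S, dist x w ≤ τ w - c + 7 * D := by
    rintro x ⟨hx, hxc⟩
    have := abs_le.1 (hτ x hx w hw)
    have := abs_le.1 hxc
    cases abs_cases (τ x - τ w) <;> linarith
  have := routeLength_le_of_forall_dist_le hdiam hfrom hto hK hne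
  have := abs_le.1 (hτ u hu w hw)
  rw [abs_of_nonpos (by linarith : τ u - τ w ≤ 0)] at this
  linarith

lemma routeLength_detour_le {D R : ℝ} (hD : 0 ≤ D)
    (hτ : ∀ x ∈ G, ∀ y ∈ G, |dist x y - dist (τ x) (τ y)| ≤ 2 * D)
    {A B u w : X} (hAτ : ∀ x ∈ G, |dist A x - τ x| ≤ D) (hB : B ∈ G) (hR : R = dist A B)
    (hu : u ∈ G) (huR : τ u ≤ R - 3 * D) (hw : w ∈ G) (hwR : R + 3 * D ≤ τ w) {P : Finset X}
    (hP : ∀ x ∈ P, x ∈ G ∧ R - 4 * D ≤ dist A x ∧ dist A x ≤ R + 4 * D) :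
    routeLength u w (P.toList ++ B :: P.toList) ≤ dist u w + 24 * (P.card + 1) * D := by
  have hband : ∀ x ∈ B :: P.toList, x ∈ G ∧ |τ x - R| ≤ 5 * D := by
    rintro x (_ | ⟨_, hx⟩)
    · have := abs_le.1 (hAτ B hB)
      exact ⟨hB, abs_le.2 ⟨by linarith, by linarith⟩⟩
    · obtain ⟨hxG, hlo, hhi⟩ := hP x (Finset.mem_toList.1 hx)
      have := abs_le.1 (hAτ x hxG)
      exact ⟨hxG, abs_le.2 ⟨by linarith, by linarith⟩⟩
  have := routeLength_le_of_abs_dist_sub_le hD hτ hu huR hw hwR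
    (fun x hx => (List.mem_append.1 hx).elim (hband x ∘ List.mem_cons_of_mem B) (hband x))
    (by simp)
  simp only [List.length_append, List.length_cons, Finset.length_toList, Nat.cast_add,
    Nat.cast_one] at this
  linarith

lemma TSP_add_TSP_le_of_abs_dist_sub_le [DecidableEq X] {D R : ℝ} (hD : 0 < D)
    (hτ : ∀ x ∈ G, ∀ y ∈ G, |dist x y - dist (τ x) (τ y)| ≤ 2 * D)
    {A B C : X} (hAτ : ∀ x ∈ G, |dist A x - τ x| ≤ D) (hA : A ∈ G) (hB : B ∈ G) (hC : C ∈ G)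
    (hR : R = dist A B) (hRD : 4 * D ≤ R) (hACR : R + 4 * D ≤ dist A C)
    {L₁ L₂ L₃ : Finset X} (hG : ∀ x ∈ L₁ ∪ L₂, x ∈ G)
    (hL₁ : ∀ x ∈ L₁, dist A x ≤ R + 4 * D) (hL₂ : ∀ y ∈ L₂, R - 4 * D ≤ dist A y)
    (hL₃₁ : L₁ ∆ L₂ ⊆ L₃) :
    TSP A L₁ B + TSP B L₂ C ≤ TSP A L₃ C + 24 * (((L₁ ∪ L₂).filter
      (fun x => R - 4 * D ≤ dist A x ∧ dist A x ≤ R + 4 * D)).card + 1) * D := by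
  have hτA (x : X) (hx : x ∈ G) := abs_le.1 (hAτ x hx)
  set Lo := {x ∈ G | τ x ≤ R - 3 * D}
  set Hi := {x ∈ G | R + 3 * D ≤ τ x}
  have hALo : A ∈ Lo := ⟨hA, by linarith [hτA A hA, dist_self A]⟩
  have hCHi : C ∈ Hi := ⟨hC, by linarith [hτA C hC]⟩
  have hdisj : Disjoint Lo Hi := Set.disjoint_left.2 fun x hLo hHi => by linarith [hLo.2, hHi.2]
  obtain ⟨σ₁, σ₂, hσ₁, hσ₂, hLoσ₁, hHiσ₂, hσ⟩ := (uncrossable_of_abs_dist_sub_le hτ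
    (by linarith)).exists_routeLength_append_le_TSP hdisj hALo hCHi L₃
  set P := (L₁ ∪ L₂).filter fun x => R - 4 * D ≤ dist A x ∧ dist A x ≤ R + 4 * D
  have hcover₁ : L₁ ⊆ (σ₁ ++ P.toList).toFinset := by
    intro x hx
    rw [List.mem_toFinset, List.mem_append, Finset.mem_toList]
    by_cases hlow : dist A x < R - 4 * D
    · have hx₃ : x ∈ L₃ :=
        hL₃₁ (Finset.mem_symmDiff.2 (Or.inl ⟨hx, fun h => by linarith [hL₂ x h]⟩))
      have hxG := hG x (Finset.mem_union_left _ hx)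
      exact Or.inl (hLoσ₁ x hx₃ ⟨hxG, by linarith [hτA x hxG]⟩)
    · exact Or.inr (Finset.mem_filter.2 ⟨Finset.mem_union_left _ hx, not_lt.1 hlow, hL₁ x hx⟩)
  have hcover₂ : L₂ ⊆ (P.toList ++ σ₂).toFinset := by
    intro x hx
    rw [List.mem_toFinset, List.mem_append, Finset.mem_toList]
    by_cases hhigh : R + 4 * D < dist A x
    · have hx₃ : x ∈ L₃ :=
        hL₃₁ (Finset.mem_symmDiff.2 (Or.inr ⟨hx, fun h => by linarith [hL₁ x h]⟩))
      have hxG := hG x (Finset.mem_union_right _ hx)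
      exact Or.inr (hHiσ₂ x hx₃ ⟨hxG, by linarith [hτA x hxG]⟩)
    · exact Or.inl (Finset.mem_filter.2 ⟨Finset.mem_union_right _ hx, hL₂ x hx, not_lt.1 hhigh⟩)
  have hu : σ₁.getLastD A ∈ Lo := (List.mem_cons.1 List.getLastD_mem_cons).elim (· ▸ hALo) (hσ₁ _)
  have hw : σ₂.headD C ∈ Hi := (List.mem_cons.1 List.headD_mem_cons).elim (· ▸ hCHi) (hσ₂ _)
  have hdetour := routeLength_detour_le hD.le hτ hAτ hB hR hu.1 hu.2 hw.1 hw.2 (P := P)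
    fun x hx => (Finset.mem_filter.1 hx).imp_left (hG x)
  linarith [TSP_add_TSP_le_routeLength_splice hcover₁ hcover₂ A B C]

end RoughCoordinate

lemma exists_abs_dist_sub_le_of_geodesic {T D : ℝ} (hT : 0 ≤ T)
    {γ : ℝ → X} (hgeo : ∀ s ∈ Set.Icc 0 T, ∀ t ∈ Set.Icc 0 T, dist (γ s) (γ t) = |s - t|)
    {G : Set X} (hG : ∀ x ∈ G, infDist x (γ '' Set.Icc 0 T) ≤ D) :
    ∃ τ : X → ℝ, (∀ x ∈ G, |dist (γ 0) x - τ x| ≤ D) ∧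
      ∀ x ∈ G, ∀ y ∈ G, |dist x y - dist (τ x) (τ y)| ≤ 2 * D := by
  have hγ : ContinuousOn γ (Set.Icc 0 T) := (LipschitzOnWith.of_dist_le_mul (K := 1)
    fun s hs t ht => by simp [hgeo s hs t ht, Real.dist_eq]).continuousOn
  have hproj (x : X) : ∃ t ∈ Set.Icc 0 T, infDist x (γ '' Set.Icc 0 T) = dist x (γ t) := by
    obtain ⟨_, ⟨t, ht, rfl⟩, hxt⟩ := (isCompact_Icc.image_of_continuousOn hγ).exists_infDist_eq_dist
      ((Set.nonempty_Icc.2 hT).image γ) x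
    exact ⟨t, ht, hxt⟩
  choose τ hτT hτ using hproj
  have hnear (x : X) (hx : x ∈ G) : dist x (γ (τ x)) ≤ D := hτ x ▸ hG x hx
  refine ⟨τ, fun x hx => ?_, fun x hx y hy => ?_⟩
  · have : dist (γ 0) (γ (τ x)) = τ x := by
      simp [hgeo 0 ⟨le_rfl, hT⟩ _ (hτT x), abs_of_nonneg (hτT x).1]
    calc |dist (γ 0) x - τ x| = dist (dist (γ 0) x) (dist (γ 0) (γ (τ x))) := by
          rw [this, Real.dist_eq]
      _ ≤ dist (γ 0) (γ 0) + dist x (γ (τ x)) := dist_dist_dist_le _ _ _ _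
      _ ≤ D := by simpa using hnear x hx
  · calc |dist x y - dist (τ x) (τ y)| = dist (dist x y) (dist (γ (τ x)) (γ (τ y))) := by
          rw [hgeo _ (hτT x) _ (hτT y), Real.dist_eq, Real.dist_eq]
      _ ≤ dist x (γ (τ x)) + dist y (γ (τ y)) := dist_dist_dist_le _ _ _ _
      _ ≤ 2 * D := by linarith [hnear x hx, hnear y hy]

end

theorem tsp_defect_bound_general
    {X : Type*} [MetricSpace X] [DecidableEq X]
    (A B C : X)
    (T : ℝ) (γ : ℝ → X)
    (hT : T = dist A C) (hγA : γ 0 = A) (hγC : γ T = C)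
    (hgeo : ∀ s ∈ Set.Icc (0 : ℝ) T, ∀ t ∈ Set.Icc (0 : ℝ) T, dist (γ s) (γ t) = |s - t|)
    (R D : ℝ) (hR : R = dist A B) (hD : 0 < D)
    (hBγ : infDist B (γ '' Set.Icc 0 T) ≤ D)
    (hRD : 4 * D ≤ R) (hACR : R + 4 * D ≤ dist A C)
    (L₁ L₂ : Finset X)
    (hL : ∀ x ∈ L₁ ∪ L₂, infDist x (γ '' Set.Icc 0 T) ≤ D)
    (hL₁ : ∀ x ∈ L₁, dist A x ≤ R + 4 * D)
    (hL₂ : ∀ y ∈ L₂, R - 4 * D ≤ dist A y)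
    (N : ℕ)
    (hN : N = ((L₁ ∪ L₂).filter
      (fun x => R - 4 * D ≤ dist A x ∧ dist A x ≤ R + 4 * D)).card)
    (L₃ : Finset X) (hL₃₁ : L₁ ∆ L₂ ⊆ L₃) (hL₃₂ : L₃ ⊆ L₁ ∪ L₂) :
    0 ≤ TSP A L₁ B + TSP B L₂ C - TSP A L₃ C ∧
      TSP A L₁ B + TSP B L₂ C - TSP A L₃ C ≤ 24 * (N + 1) * D := by
  have hT₀ : 0 ≤ T := hT ▸ dist_nonneg
  obtain ⟨τ, hAτ, hτ⟩ := exists_abs_dist_sub_le_of_geodesic hT₀ hgeo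
    (G := {x | infDist x (γ '' Set.Icc 0 T) ≤ D}) fun x hx => hx
  have hγG (t : ℝ) (ht : t ∈ Set.Icc 0 T) : infDist (γ t) (γ '' Set.Icc 0 T) ≤ D :=
    (infDist_zero_of_mem (Set.mem_image_of_mem γ ht)).trans_le hD.le
  have hupper := TSP_add_TSP_le_of_abs_dist_sub_le hD hτ (hγA ▸ hAτ) (hγA ▸ hγG 0 ⟨le_rfl, hT₀⟩)
    hBγ (hγC ▸ hγG T ⟨hT₀, le_rfl⟩) hR hRD hACR hL hL₁ hL₂ hL₃₁
  rw [← hN] at hupper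
  have hlower := TSP_le_TSP_add_TSP hL₃₂ A B C
  constructor <;> linarith

/-- **Main combinatorial lemma on the defect of the TSP.** Let `γ : [0,T] → X` be a geodesic
from `A` to `C` (with `T = d(A,C)`), `R = d(A,B)`, `D > 0` with `dist(B,γ) ≤ D`, `R ≥ 4D`
and `d(A,C) ≥ R + 4D`. Let `L₁, L₂` be finite sets in the `D`-neighbourhood of `γ` with
`d(A,x) ≤ R + 4D` on `L₁` and `d(A,y) ≥ R − 4D` on `L₂`, and let `N` be the number of
points of `L₁ ∪ L₂` with `R − 4D ≤ d(A,·) ≤ R + 4D`. Then for every `L₃` with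
`L₁ △ L₂ ⊆ L₃ ⊆ L₁ ∪ L₂`,
`0 ≤ TSP(A,L₁,B) + TSP(B,L₂,C) − TSP(A,L₃,C) ≤ 24(N+1)D`. -/
theorem tsp_defect_bound
    {X : Type*} [MetricSpace X] [DecidableEq X]
    (A B C : X) (hAB : A ≠ B) (hBC : B ≠ C) (hAC : A ≠ C)
    (T : ℝ) (γ : ℝ → X)
    (hT : T = dist A C) (hγA : γ 0 = A) (hγC : γ T = C)
    (hgeo : ∀ s ∈ Set.Icc (0 : ℝ) T, ∀ t ∈ Set.Icc (0 : ℝ) T, dist (γ s) (γ t) = |s - t|)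
    (R D : ℝ) (hR : R = dist A B) (hD : 0 < D)
    (hBγ : infDist B (γ '' Set.Icc 0 T) ≤ D)
    (hRD : 4 * D ≤ R) (hACR : R + 4 * D ≤ dist A C)
    (L₁ L₂ : Finset X)
    (hL : ∀ x ∈ L₁ ∪ L₂, infDist x (γ '' Set.Icc 0 T) ≤ D)
    (hL₁ : ∀ x ∈ L₁, dist A x ≤ R + 4 * D)
    (hL₂ : ∀ y ∈ L₂, R - 4 * D ≤ dist A y)
    (N : ℕ)
    (hN : N = ((L₁ ∪ L₂).filter
      (fun x => R - 4 * D ≤ dist A x ∧ dist A x ≤ R + 4 * D)).card)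
    (L₃ : Finset X) (hL₃₁ : L₁ ∆ L₂ ⊆ L₃) (hL₃₂ : L₃ ⊆ L₁ ∪ L₂) :
    0 ≤ TSP A L₁ B + TSP B L₂ C - TSP A L₃ C ∧
      TSP A L₁ B + TSP B L₂ C - TSP A L₃ C ≤ 24 * (N + 1) * D :=
  tsp_defect_bound_general A B C T γ hT hγA hγC hgeo R D hR hD hBγ hRD hACR L₁ L₂ hL hL₁ hL₂ N hN L₃
    hL₃₁ hL₃₂
end

section
/- Let (X,d) be a metric space, let γ be a geodesic from A to C with T = d(A,C), and let R and D > 0 satisfy R − 4D ≥ 0 and R + 4D ≤ T. Set B_1 = γ(R − 4D) and B_2 = γ(R + 4D). Let P ∈ X satisfy dist(P, γ) ≤ D and d(A,P) ≤ R − 4D, and let Q ∈ X satisfy dist(Q, γ) ≤ D and d(A,Q) ≥ R + 4D. Then d(P, B_1) + d(B_2, Q) ≤ d(P, Q). -/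
/-!
Let `γ p`, `γ q` be nearest points of the geodesic to `P`, `Q`. Since `γ` starts at `A`,
`p ≤ d(A,P) + D ≤ R - 3D` and `q ≥ d(A,Q) - D ≥ R + 3D`. The triangle inequality through
`γ p` and `γ q` then bounds `d(P,B₁) + d(B₂,Q)` by `d(P,Q)` plus detours of total length at
most `8D`, which the gap `B₁B₂` of length `8D` absorbs.
-/

open Metric

def IsGeodesicOn {X : Type*} [PseudoMetricSpace X] (γ : ℝ → X) (s : Set ℝ) : Prop :=
  ∀ x ∈ s, ∀ y ∈ s, dist (γ x) (γ y) = |x - y|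

namespace IsGeodesicOn

variable {X : Type*} [PseudoMetricSpace X] {γ : ℝ → X} {s : Set ℝ}

theorem lipschitzOnWith (hγ : IsGeodesicOn γ s) : LipschitzOnWith 1 γ s :=
  LipschitzOnWith.of_dist_le_mul fun x hx y hy => by
    rw [hγ x hx y hy, Real.dist_eq, NNReal.coe_one, one_mul]

theorem dist_eq_sub (hγ : IsGeodesicOn γ s) {x y : ℝ} (hx : x ∈ s) (hy : y ∈ s) (hxy : x ≤ y) :
    dist (γ x) (γ y) = y - x := by
  rw [hγ x hx y hy, abs_of_nonpos (sub_nonpos.mpr hxy), neg_sub]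

theorem exists_dist_le_of_infDist_image_Icc_le {a b : ℝ} (hγ : IsGeodesicOn γ (Set.Icc a b)) (hab : a ≤ b)
    {P : X} {D : ℝ} (hP : infDist P (γ '' Set.Icc a b) ≤ D) :
    ∃ p ∈ Set.Icc a b, dist P (γ p) ≤ D := by
  have hcomp : IsCompact (γ '' Set.Icc a b) :=
    isCompact_Icc.image_of_continuousOn hγ.lipschitzOnWith.continuousOn
  obtain ⟨_, ⟨p, hp, rfl⟩, hPp⟩ :=
    hcomp.exists_infDist_eq_dist ((Set.nonempty_Icc.mpr hab).image γ) P
  exact ⟨p, hp, hPp ▸ hP⟩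

theorem dist_add_dist_le_dist (hγ : IsGeodesicOn γ s) {p q b₁ b₂ D : ℝ} {P Q : X}
    (hp : p ∈ s) (hq : q ∈ s) (hb₁ : b₁ ∈ s) (hb₂ : b₂ ∈ s)
    (hPp : dist P (γ p) ≤ D) (hQq : dist Q (γ q) ≤ D)
    (hpb₁ : p ≤ b₁ + D) (hb₂q : b₂ - D ≤ q) (hb₁₂ : b₁ + 8 * D ≤ b₂) :
    dist P (γ b₁) + dist (γ b₂) Q ≤ dist P Q := by
  have hP : dist P (γ b₁) ≤ dist P (γ p) + |p - b₁| :=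
    hγ p hp b₁ hb₁ ▸ dist_triangle P (γ p) (γ b₁)
  have hQ : dist (γ b₂) Q ≤ |b₂ - q| + dist Q (γ q) :=
    hγ b₂ hb₂ q hq ▸ dist_comm Q (γ q) ▸ dist_triangle (γ b₂) (γ q) Q
  have hPQ : |p - q| ≤ dist P (γ p) + dist P Q + dist Q (γ q) :=
    hγ p hp q hq ▸ dist_comm P (γ p) ▸ dist_triangle4 (γ p) P Q (γ q)
  rcases abs_cases (p - b₁) with ⟨h₁, _⟩ | ⟨h₁, _⟩ <;>
    rcases abs_cases (b₂ - q) with ⟨h₂, _⟩ | ⟨h₂, _⟩ <;>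
      linarith [neg_abs_le (p - q), dist_nonneg (x := P) (y := γ p), dist_nonneg (x := Q) (y := γ q)]

end IsGeodesicOn

theorem leap_projection_general
    {X : Type*} [MetricSpace X] (A : X) (T : ℝ) (γ : ℝ → X)
    (hγA : γ 0 = A)
    (hgeo : ∀ s ∈ Set.Icc (0 : ℝ) T, ∀ t ∈ Set.Icc (0 : ℝ) T, dist (γ s) (γ t) = |s - t|)
    (R D : ℝ) (hR₂ : R + 4 * D ≤ T)
    (P Q : X)
    (hPγ : infDist P (γ '' Set.Icc 0 T) ≤ D) (hPA : dist A P ≤ R - 4 * D)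
    (hQγ : infDist Q (γ '' Set.Icc 0 T) ≤ D) (hQA : R + 4 * D ≤ dist A Q) :
    dist P (γ (R - 4 * D)) + dist (γ (R + 4 * D)) Q ≤ dist P Q := by
  have hγ : IsGeodesicOn γ (Set.Icc 0 T) := hgeo
  have hD : 0 ≤ D := infDist_nonneg.trans hPγ
  have hR : 0 ≤ R - 4 * D := dist_nonneg.trans hPA
  have hT : 0 ≤ T := by linarith
  obtain ⟨p, hp, hPp⟩ := hγ.exists_dist_le_of_infDist_image_Icc_le hT hPγ
  obtain ⟨q, hq, hQq⟩ := hγ.exists_dist_le_of_infDist_image_Icc_le hT hQγ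
  have h0 : (0 : ℝ) ∈ Set.Icc 0 T := ⟨le_rfl, hT⟩
  have hAp : dist A (γ p) = p := by rw [← hγA, hγ.dist_eq_sub h0 hp hp.1, sub_zero]
  have hAq : dist A (γ q) = q := by rw [← hγA, hγ.dist_eq_sub h0 hq hq.1, sub_zero]
  refine hγ.dist_add_dist_le_dist hp hq ⟨hR, by linarith⟩ ⟨by linarith, hR₂⟩ hPp hQq ?_ ?_ ?_
  · linarith [dist_triangle A P (γ p)]
  · linarith [dist_triangle A (γ q) Q, dist_comm Q (γ q)]
  · linarith

/-- **Claim (leap projection).** Let `γ : [0,T] → X` be a geodesic from `A` to `C` with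
`T = d(A,C)`, let `D > 0` and `R` satisfy `R − 4D ≥ 0` and `R + 4D ≤ T`, and set
`B₁ = γ(R − 4D)`, `B₂ = γ(R + 4D)`. If `P` is within distance `D` of `γ` with
`d(A,P) ≤ R − 4D` and `Q` is within distance `D` of `γ` with `d(A,Q) ≥ R + 4D`, then
`d(P,B₁) + d(B₂,Q) ≤ d(P,Q)`. -/
theorem leap_projection
    {X : Type*} [MetricSpace X] (A C : X) (T : ℝ) (γ : ℝ → X)
    (hT : T = dist A C) (hγA : γ 0 = A) (hγC : γ T = C)
    (hgeo : ∀ s ∈ Set.Icc (0 : ℝ) T, ∀ t ∈ Set.Icc (0 : ℝ) T, dist (γ s) (γ t) = |s - t|)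
    (R D : ℝ) (hD : 0 < D) (hR₁ : 0 ≤ R - 4 * D) (hR₂ : R + 4 * D ≤ T)
    (P Q : X)
    (hPγ : infDist P (γ '' Set.Icc 0 T) ≤ D) (hPA : dist A P ≤ R - 4 * D)
    (hQγ : infDist Q (γ '' Set.Icc 0 T) ≤ D) (hQA : R + 4 * D ≤ dist A Q) :
    dist P (γ (R - 4 * D)) + dist (γ (R + 4 * D)) Q ≤ dist P Q :=
  leap_projection_general A T γ hγA hgeo R D hR₂ P Q hPγ hPA hQγ hQA
end

section
/- Let Q = (Q_n) be a defective adapted cocycle on Ω = G^{ℤ₊} such that each Q_n is nonnegative, E[Q_1] < ∞, and there exists a constant C_4 > 0 with E[|Ψ_{m,n}|] ≤ C_4 (m+n)^{1/4} for all m,n ≥ 1. Then the asymptotic rate of escape ℓ = lim_{n→∞} E[Q_n]/n exists and is a finite nonnegative real number, and there exists a constant C_3 > 0 such that |E[Q_n]/n − ℓ| ≤ C_3 n^{−3/4} for all n ≥ 1. -/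
open MeasureTheory ProbabilityTheory Filter Topology

/-- The shift map `θ` on the space of increments `Ω = G^{ℤ₊}`;
coordinate `k : ℕ` represents the increment `X_{k+1}`. -/
def shift {G : Type*} (ω : ℕ → G) : ℕ → G := fun k => ω (k + 1)

/-- `P` is the product measure `μ^{⊗ℤ₊}` on `Ω = G^{ℤ₊}`, characterized as the (unique)
probability measure whose coordinates are i.i.d. with common law `μ`. -/
def IsIIDProduct {G : Type*} [MeasurableSpace G] (μ : Measure G) (P : Measure (ℕ → G)) : Prop :=
  IsProbabilityMeasure P ∧
    iIndepFun (fun k (ω : ℕ → G) => ω k) P ∧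
    ∀ k, Measure.map (fun ω : ℕ → G => ω k) P = μ

/-- A defective adapted cocycle (DAC) on `Ω = G^{ℤ₊}`: `Q n` is measurable and depends
only on the first `n` increments, with the convention `Q 0 ≡ 0`. -/
structure DAC (G : Type*) [MeasurableSpace G] where
  Q : ℕ → (ℕ → G) → ℝ
  zero : ∀ ω, Q 0 ω = 0
  meas : ∀ n, Measurable (Q n)
  adapted : ∀ n (ω ω' : ℕ → G), (∀ k < n, ω k = ω' k) → Q n ω = Q n ω'

/-- The defect `Ψ_{m,n}(ω) = Q_m(ω) + Q_n(θ^m ω) − Q_{m+n}(ω)` of a DAC. -/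
def DAC.defect {G : Type*} [MeasurableSpace G] (𝒬 : DAC G) (m n : ℕ) (ω : ℕ → G) : ℝ :=
  𝒬.Q m ω + 𝒬.Q n (shift^[m] ω) - 𝒬.Q (m + n) ω

/-! Because the coordinates are i.i.d., the shift `θ` preserves `P`, so `E[Q_n ∘ θ^m] = E[Q_n]`
and integrating the defect shows that `a_n = E[Q_n]` is almost additive:
`|a_{m+n} - a_m - a_n| ≤ C (m+n)^α` with `α = 1/4`. For such a sequence, `b_n = a_n / n` moves by
`O(n^{α-1})` when `n` is doubled, so along every dyadic orbit `2^k n` it converges geometrically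
fast to a limit within `O(n^{α-1})` of `b_n`. Comparing `a_{2^k n}` with `n a_{2^k}` shows that all
these dyadic limits coincide. -/

lemma IsIIDProduct.map_tail_eq_infinitePi {G : Type*} [MeasurableSpace G] {μ : Measure G}
    {P : Measure (ℕ → G)} (hP : IsIIDProduct μ P) (m : ℕ) :
    P.map (fun ω k => ω (k + m)) = Measure.infinitePi (fun _ => μ) := by
  rw [(hP.2.1.precomp (g := (· + m)) (add_left_injective m)).map_fun_eq_infinitePi_map
    fun k => measurable_pi_apply (k + m)]
  exact congrArg _ (funext fun k => hP.2.2 (k + m))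

theorem IsIIDProduct.measurePreserving_shift {G : Type*} [MeasurableSpace G] {μ : Measure G}
    {P : Measure (ℕ → G)} (hP : IsIIDProduct μ P) : MeasurePreserving shift P P where
  measurable := measurable_pi_lambda _ fun k => measurable_pi_apply (k + 1)
  map_eq := by
    rw [show shift = fun (ω : ℕ → G) k => ω (k + 1) from rfl, hP.map_tail_eq_infinitePi,
      ← hP.map_tail_eq_infinitePi 0]
    simp only [add_zero]
    exact Measure.map_id'

def IsAlmostAdditive (C α : ℝ) (a : ℕ → ℝ) : Prop :=
  ∀ m n : ℕ, 1 ≤ m → 1 ≤ n → |a (m + n) - a m - a n| ≤ C * ((m + n : ℕ) : ℝ) ^ α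

lemma natCast_two_pow_mul_rpow (k n : ℕ) (e : ℝ) :
    ((2 ^ k * n : ℕ) : ℝ) ^ e = ((2 : ℝ) ^ e) ^ k * (n : ℝ) ^ e := by
  push_cast
  rw [Real.mul_rpow (by positivity) n.cast_nonneg, ← Real.rpow_natCast, ← Real.rpow_mul two_pos.le,
    ← Real.rpow_natCast, ← Real.rpow_mul two_pos.le, mul_comm (k : ℝ) e]

lemma two_rpow_sub_one_lt_one {α : ℝ} (hα : α < 1) : (2 : ℝ) ^ (α - 1) < 1 :=
  Real.rpow_lt_one_of_one_lt_of_neg one_lt_two (by linarith)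

namespace IsAlmostAdditive

variable {C α : ℝ} {a : ℕ → ℝ}

lemma abs_sub_mul_le (ha : IsAlmostAdditive C α a) (hC : 0 ≤ C) (hα : 0 ≤ α) {m j : ℕ}
    (hm : 1 ≤ m) (hj : 1 ≤ j) : |a (m * j) - j * a m| ≤ C * j * ((m * j : ℕ) : ℝ) ^ α := by
  induction j, hj using Nat.le_induction with
  | base =>
    simp only [mul_one, Nat.cast_one, one_mul, sub_self, abs_zero]
    positivity
  | succ j hj ih =>
    have hstep := ha (m * j) m (Nat.mul_pos hm hj) hm
    rw [← Nat.mul_succ] at hstep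
    calc |a (m * (j + 1)) - ↑(j + 1) * a m|
        = |(a (m * (j + 1)) - a (m * j) - a m) + (a (m * j) - j * a m)| := by push_cast; ring_nf
      _ ≤ C * ((m * (j + 1) : ℕ) : ℝ) ^ α + C * j * ((m * (j + 1) : ℕ) : ℝ) ^ α :=
        (abs_add_le _ _).trans (add_le_add hstep (ih.trans (by gcongr; omega)))
      _ = C * ↑(j + 1) * ((m * (j + 1) : ℕ) : ℝ) ^ α := by push_cast; ring

lemma abs_div_sub_div_le (ha : IsAlmostAdditive C α a) (hC : 0 ≤ C) (hα : 0 ≤ α) {m j : ℕ}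
    (hm : 1 ≤ m) (hj : 1 ≤ j) :
    |a (m * j) / (m * j : ℕ) - a m / m| ≤ C * j * ((m * j : ℕ) : ℝ) ^ (α - 1) := by
  have hN : (0 : ℝ) < (m * j : ℕ) := by exact_mod_cast Nat.mul_pos hm hj
  have hm' : (m : ℝ) ≠ 0 := by positivity
  have hdiff : a (m * j) / (m * j : ℕ) - a m / m = (a (m * j) - j * a m) / (m * j : ℕ) := by
    push_cast
    field_simp
  rw [hdiff, abs_div, abs_of_pos hN, Real.rpow_sub_one hN.ne', ← mul_div_assoc]
  exact div_le_div_of_nonneg_right (ha.abs_sub_mul_le hC hα hm hj) hN.le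

lemma dist_dyadic_le (ha : IsAlmostAdditive C α a) (hC : 0 ≤ C) (hα : 0 ≤ α) {n : ℕ}
    (hn : 1 ≤ n) (k : ℕ) :
    dist (a (2 ^ k * n) / (2 ^ k * n : ℕ)) (a (2 ^ (k + 1) * n) / (2 ^ (k + 1) * n : ℕ)) ≤
      2 * C * 2 ^ (α - 1) * (n : ℝ) ^ (α - 1) * ((2 : ℝ) ^ (α - 1)) ^ k := by
  have hk : 1 ≤ 2 ^ k * n := Nat.mul_pos (Nat.two_pow_pos k) hn
  have h := ha.abs_div_sub_div_le hC hα hk one_lt_two.le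
  rw [show 2 ^ k * n * 2 = 2 ^ (k + 1) * n by ring, natCast_two_pow_mul_rpow] at h
  rw [Real.dist_eq, abs_sub_comm]
  convert h using 1
  push_cast
  ring

lemma exists_tendsto_dyadic (ha : IsAlmostAdditive C α a) (hC : 0 ≤ C) (hα₀ : 0 ≤ α)
    (hα₁ : α < 1) {n : ℕ} (hn : 1 ≤ n) :
    ∃ L, Tendsto (fun k => a (2 ^ k * n) / (2 ^ k * n : ℕ)) atTop (𝓝 L) ∧
      |a n / n - L| ≤ 2 * C * 2 ^ (α - 1) / (1 - 2 ^ (α - 1)) * (n : ℝ) ^ (α - 1) := by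
  have hr := two_rpow_sub_one_lt_one hα₁
  have hstep := ha.dist_dyadic_le hC hα₀ hn
  obtain ⟨L, hL⟩ := cauchySeq_tendsto_of_complete (cauchySeq_of_le_geometric _ _ hr hstep)
  refine ⟨L, hL, ?_⟩
  have h := dist_le_of_le_geometric_of_tendsto₀ _ _ hr hstep hL
  rw [Real.dist_eq] at h
  simp only [pow_zero, one_mul] at h
  convert h using 1
  ring

lemma tendsto_dyadic_sub_dyadic (ha : IsAlmostAdditive C α a) (hC : 0 ≤ C) (hα₀ : 0 ≤ α)
    (hα₁ : α < 1) {n : ℕ} (hn : 1 ≤ n) :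
    Tendsto (fun k => a (2 ^ k * n) / (2 ^ k * n : ℕ) - a (2 ^ k) / (2 ^ k : ℕ)) atTop (𝓝 0) := by
  have hr := two_rpow_sub_one_lt_one hα₁
  have hgeom :
      Tendsto (fun k => C * n * (n : ℝ) ^ (α - 1) * ((2 : ℝ) ^ (α - 1)) ^ k) atTop (𝓝 0) := by
    simpa using (tendsto_pow_atTop_nhds_zero_of_lt_one (by positivity) hr).const_mul
      (C * n * (n : ℝ) ^ (α - 1))
  refine squeeze_zero_norm (fun k => ?_) hgeom
  have h := ha.abs_div_sub_div_le hC hα₀ (Nat.two_pow_pos k) hn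
  rw [natCast_two_pow_mul_rpow] at h
  rw [Real.norm_eq_abs]
  convert h using 1
  ring

theorem exists_tendsto_div (ha : IsAlmostAdditive C α a) (hC : 0 < C) (hα₀ : 0 ≤ α)
    (hα₁ : α < 1) :
    ∃ ℓ, Tendsto (fun n : ℕ => a n / n) atTop (𝓝 ℓ) ∧
      ∃ K > 0, ∀ n : ℕ, 1 ≤ n → |a n / n - ℓ| ≤ K * (n : ℝ) ^ (α - 1) := by
  set K := 2 * C * 2 ^ (α - 1) / (1 - 2 ^ (α - 1))
  have hK : 0 < K := div_pos (by positivity) (by linarith [two_rpow_sub_one_lt_one hα₁])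
  obtain ⟨ℓ, hℓ, -⟩ := ha.exists_tendsto_dyadic hC.le hα₀ hα₁ le_rfl
  simp only [mul_one] at hℓ
  have hbound : ∀ n : ℕ, 1 ≤ n → |a n / n - ℓ| ≤ K * (n : ℝ) ^ (α - 1) := by
    intro n hn
    obtain ⟨L, hL, hnL⟩ := ha.exists_tendsto_dyadic hC.le hα₀ hα₁ hn
    have hLℓ : L = ℓ := tendsto_nhds_unique hL <| by
      simpa using hℓ.add (ha.tendsto_dyadic_sub_dyadic hC.le hα₀ hα₁ hn)
    rwa [← hLℓ]
  refine ⟨ℓ, ?_, K, hK, hbound⟩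
  rw [← tendsto_sub_nhds_zero_iff]
  have hdecay : Tendsto (fun n : ℕ => K * (n : ℝ) ^ (α - 1)) atTop (𝓝 0) := by
    simpa [neg_sub] using ((tendsto_rpow_neg_atTop (y := 1 - α) (by linarith)).comp
      tendsto_natCast_atTop_atTop).const_mul K
  refine squeeze_zero_norm' ?_ hdecay
  filter_upwards [eventually_ge_atTop 1] with n hn
  exact hbound n hn

end IsAlmostAdditive

lemma integrable_of_lintegral_ofReal_abs_le {Ω : Type*} [MeasurableSpace Ω] {P : Measure Ω}
    {f : Ω → ℝ} {B : ℝ} (hf : AEStronglyMeasurable f P)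
    (h : ∫⁻ ω, ENNReal.ofReal |f ω| ∂P ≤ ENNReal.ofReal B) : Integrable f P :=
  ⟨hf, (hasFiniteIntegral_iff_norm f).2 (h.trans_lt ENNReal.ofReal_lt_top)⟩

lemma integral_abs_le_of_lintegral_ofReal_abs_le {Ω : Type*} [MeasurableSpace Ω]
    {P : Measure Ω} {f : Ω → ℝ} {B : ℝ} (hf : Integrable f P) (hB : 0 ≤ B)
    (h : ∫⁻ ω, ENNReal.ofReal |f ω| ∂P ≤ ENNReal.ofReal B) : ∫ ω, |f ω| ∂P ≤ B := by
  rwa [← ofReal_integral_eq_lintegral_ofReal hf.abs (ae_of_all _ fun ω => abs_nonneg _),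
    ENNReal.ofReal_le_ofReal_iff hB] at h

namespace DAC

variable {G : Type*} [MeasurableSpace G] {P : Measure (ℕ → G)} (𝒬 : DAC G)

lemma measurable_defect (hθ : Measurable (shift : (ℕ → G) → ℕ → G)) (m n : ℕ) :
    Measurable (𝒬.defect m n) :=
  ((𝒬.meas m).add ((𝒬.meas n).comp (hθ.iterate m))).sub (𝒬.meas (m + n))

lemma integral_Q_shift_iterate (hθ : MeasurePreserving shift P P) (m n : ℕ) :
    ∫ ω, 𝒬.Q n (shift^[m] ω) ∂P = ∫ ω, 𝒬.Q n ω ∂P := by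
  have h := integral_map (μ := P) (hθ.iterate m).measurable.aemeasurable
    (𝒬.meas n).aestronglyMeasurable
  rw [(hθ.iterate m).map_eq] at h
  exact h.symm

lemma integrable_Q (hθ : MeasurePreserving shift P P) (h₁ : Integrable (𝒬.Q 1) P)
    (hΨ : ∀ n, 1 ≤ n → Integrable (𝒬.defect n 1) P) (n : ℕ) : Integrable (𝒬.Q n) P := by
  induction n with
  | zero => simp [funext 𝒬.zero]
  | succ n ih =>
    rcases Nat.eq_zero_or_pos n with rfl | hn
    · exact h₁
    have hsplit : 𝒬.Q (n + 1) = fun ω => 𝒬.Q n ω + 𝒬.Q 1 (shift^[n] ω) - 𝒬.defect n 1 ω := by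
      funext ω
      simp only [defect]
      ring
    rw [hsplit]
    exact (ih.add ((hθ.iterate n).integrable_comp_of_integrable h₁)).sub (hΨ n hn)

lemma abs_integral_add_sub_le (hθ : MeasurePreserving shift P P)
    (hint : ∀ n, Integrable (𝒬.Q n) P) (m n : ℕ) :
    |∫ ω, 𝒬.Q (m + n) ω ∂P - ∫ ω, 𝒬.Q m ω ∂P - ∫ ω, 𝒬.Q n ω ∂P| ≤
      ∫ ω, |𝒬.defect m n ω| ∂P := by
  have hshift : Integrable (fun ω => 𝒬.Q n (shift^[m] ω)) P :=
    (hθ.iterate m).integrable_comp_of_integrable (hint n)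
  have hΨ : ∫ ω, 𝒬.defect m n ω ∂P =
      ∫ ω, 𝒬.Q m ω ∂P + ∫ ω, 𝒬.Q n ω ∂P - ∫ ω, 𝒬.Q (m + n) ω ∂P := by
    simp_rw [defect]
    rw [integral_sub (f := fun ω => 𝒬.Q m ω + 𝒬.Q n (shift^[m] ω)) ((hint m).add hshift)
      (hint (m + n)), integral_add (hint m) hshift,
      𝒬.integral_Q_shift_iterate hθ]
  calc _ = |∫ ω, 𝒬.defect m n ω ∂P| := by rw [hΨ, abs_sub_comm]; ring_nf
    _ ≤ ∫ ω, |𝒬.defect m n ω| ∂P := abs_integral_le_integral_abs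

end DAC

theorem rate_of_escape_exists_with_error_bound_general
    {G : Type*} [MeasurableSpace G]
    (μ : Measure G) (P : Measure (ℕ → G)) (hP : IsIIDProduct μ P)
    (𝒬 : DAC G) (hpos : ∀ n ω, 0 ≤ 𝒬.Q n ω)
    (hmom : Integrable (𝒬.Q 1) P)
    (C₄ : ℝ) (hC₄ : 0 < C₄)
    (hdef : ∀ m n : ℕ, 1 ≤ m → 1 ≤ n →
      ∫⁻ ω, ENNReal.ofReal |𝒬.defect m n ω| ∂P ≤
        ENNReal.ofReal (C₄ * ((m + n : ℕ) : ℝ) ^ ((1 : ℝ) / 4))) :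
    ∃ ℓ : ℝ, 0 ≤ ℓ ∧
      Tendsto (fun n : ℕ => (∫ ω, 𝒬.Q n ω ∂P) / n) atTop (𝓝 ℓ) ∧
      ∃ C₃ > (0 : ℝ), ∀ n : ℕ, 1 ≤ n →
        |(∫ ω, 𝒬.Q n ω ∂P) / n - ℓ| ≤ C₃ * (n : ℝ) ^ (-(3 : ℝ) / 4) := by
  have hθ := hP.measurePreserving_shift
  have hΨ : ∀ m n, 1 ≤ m → 1 ≤ n → Integrable (𝒬.defect m n) P := fun m n hm hn =>
    integrable_of_lintegral_ofReal_abs_le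
      (𝒬.measurable_defect hθ.measurable m n).aestronglyMeasurable (hdef m n hm hn)
  have hint := 𝒬.integrable_Q hθ hmom fun n hn => hΨ n 1 hn le_rfl
  have ha : IsAlmostAdditive C₄ (1 / 4) fun n => ∫ ω, 𝒬.Q n ω ∂P := fun m n hm hn =>
    (𝒬.abs_integral_add_sub_le hθ hint m n).trans
      (integral_abs_le_of_lintegral_ofReal_abs_le (hΨ m n hm hn) (by positivity) (hdef m n hm hn))
  obtain ⟨ℓ, hℓ, K, hK, hbound⟩ := ha.exists_tendsto_div hC₄ (by norm_num) (by norm_num)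
  refine ⟨ℓ, ge_of_tendsto' hℓ fun n => div_nonneg (integral_nonneg (hpos n)) n.cast_nonneg, hℓ,
    K, hK, fun n hn => ?_⟩
  convert hbound n hn using 3
  norm_num

/-- **Theorem (rate of escape and error bound).** Let `Q` be a nonnegative DAC with
`E[Q₁] < ∞` and suppose there is `C₄ > 0` with `E[|Ψ_{m,n}|] ≤ C₄ (m+n)^{1/4}` for all
`m, n ≥ 1`. Then the rate of escape `ℓ = lim_{n→∞} E[Q_n]/n` exists, is a finite nonnegative
real, and there is `C₃ > 0` with `|E[Q_n]/n − ℓ| ≤ C₃ n^{−3/4}` for all `n ≥ 1`. -/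
theorem rate_of_escape_exists_with_error_bound
    {G : Type*} [Group G] [Countable G] [MeasurableSpace G] [MeasurableSingletonClass G]
    (μ : Measure G) (P : Measure (ℕ → G)) (hP : IsIIDProduct μ P)
    (𝒬 : DAC G) (hpos : ∀ n ω, 0 ≤ 𝒬.Q n ω)
    (hmom : Integrable (𝒬.Q 1) P)
    (C₄ : ℝ) (hC₄ : 0 < C₄)
    (hdef : ∀ m n : ℕ, 1 ≤ m → 1 ≤ n →
      ∫⁻ ω, ENNReal.ofReal |𝒬.defect m n ω| ∂P ≤
        ENNReal.ofReal (C₄ * ((m + n : ℕ) : ℝ) ^ ((1 : ℝ) / 4))) :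
    ∃ ℓ : ℝ, 0 ≤ ℓ ∧
      Tendsto (fun n : ℕ => (∫ ω, 𝒬.Q n ω ∂P) / n) atTop (𝓝 ℓ) ∧
      ∃ C₃ > (0 : ℝ), ∀ n : ℕ, 1 ≤ n →
        |(∫ ω, 𝒬.Q n ω ∂P) / n - ℓ| ≤ C₃ * (n : ℝ) ^ (-(3 : ℝ) / 4) :=
  rate_of_escape_exists_with_error_bound_general μ P hP 𝒬 hpos hmom C₄ hC₄ hdef
end

section
/- Let G be a countable group with a left-invariant metric d, let μ be a probability measure on G, and let p ≥ 1 be such that κ_{2p}(μ,d) = E[d(id, X_1)^{2p}] < ∞. Then for all m, n ≥ 1 the defect of the length cocycle satisfies the truncated moment bound E[|Ψ_{m,n}|^p · 1_{{|Ψ_{m,n}| ≥ (m+n)²}}] ≤ 2^{2p} κ_{2p}(μ,d). -/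
/-!
The defect `Ψ = d(1,Z_m) + d(Z_m,Z_{m+n}) - d(1,Z_{m+n})` lies in `[0, 2 d(1,Z_m)]` by the triangle
inequality, and by left invariance `d(1,Z_m) ≤ ∑_{k<m} d(1,X_k)`. On the event `Ψ ≥ (m+n)²` one has
`(m+n)^{2p} Ψ^p ≤ Ψ^{2p}`, while the power-mean inequality gives
`Ψ^{2p} ≤ 2^{2p} m^{2p-1} ∑_{k<m} d(1,X_k)^{2p}`. Dividing by `(m+n)^{2p} ≥ m^{2p}` and integrating,
the `m` identically distributed increments contribute `m κ_{2p}`, which cancels the factor `1/m`.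
-/

open MeasureTheory ProbabilityTheory Filter Topology

/-- The position `Z_n = X_1 ⋯ X_n` of the random walk at time `n` (so `Z_0 = id`). -/
def walk {G : Type*} [Group G] (n : ℕ) (ω : ℕ → G) : G := ((List.range n).map ω).prod

/-- The defect `Ψ_{m,n} = d(id, Z_m) + d(Z_m, Z_{m+n}) − d(id, Z_{m+n})`
of the length cocycle. -/
def lengthDefect {G : Type*} [Group G] [MetricSpace G] (m n : ℕ) (ω : ℕ → G) : ℝ :=
  dist (1 : G) (walk m ω) + dist (walk m ω) (walk (m + n) ω) - dist (1 : G) (walk (m + n) ω)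

open Finset

lemma rpow_two_mul_mul_rpow_le_of_sq_le {a t p : ℝ} (ha : 0 ≤ a) (hat : a ^ 2 ≤ t) (hp : 0 ≤ p) :
    a ^ (2 * p) * t ^ p ≤ t ^ (2 * p) := by
  have ht : 0 ≤ t := (sq_nonneg a).trans hat
  calc a ^ (2 * p) * t ^ p = (a ^ 2) ^ p * t ^ p := by
        rw [← Real.rpow_natCast_mul ha, Nat.cast_ofNat]
    _ ≤ t ^ p * t ^ p := by gcongr
    _ = t ^ (2 * p) := by rw [mul_comm 2 p, Real.rpow_mul ht, Real.rpow_two, sq]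

lemma lintegral_sum_comp_apply {G : Type*} [MeasurableSpace G] {μ : Measure G}
    {P : Measure (ℕ → G)} (hlaw : ∀ k, P.map (fun ω => ω k) = μ) {f : G → ENNReal}
    (hf : Measurable f) (m : ℕ) :
    ∫⁻ ω, ∑ k ∈ range m, f (ω k) ∂P = m * ∫⁻ ω, f (ω 0) ∂P := by
  have hcoord (k : ℕ) : ∫⁻ ω, f (ω k) ∂P = ∫⁻ ω, f (ω 0) ∂P := by
    rw [← lintegral_map hf (measurable_pi_apply k), hlaw, ← hlaw 0,
      lintegral_map hf (measurable_pi_apply 0)]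
  rw [lintegral_finsetSum _ fun k _ => by fun_prop]
  simp only [hcoord, sum_const, card_range, nsmul_eq_mul]

section LengthDefect

variable {G : Type*} [Group G]

lemma walk_succ (n : ℕ) (ω : ℕ → G) : walk (n + 1) ω = walk n ω * ω n := by
  simp [walk, List.range_succ]

variable [MetricSpace G]

lemma dist_one_walk_le_sum (hinv : ∀ g x y : G, dist (g * x) (g * y) = dist x y) (m : ℕ)
    (ω : ℕ → G) : dist (1 : G) (walk m ω) ≤ ∑ k ∈ range m, dist (1 : G) (ω k) := by
  induction m with
  | zero => simp [walk]
  | succ k ih =>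
    have hstep : dist (walk k ω) (walk (k + 1) ω) = dist (1 : G) (ω k) := by
      simpa [walk_succ] using hinv (walk k ω) 1 (ω k)
    calc dist (1 : G) (walk (k + 1) ω)
        ≤ dist (1 : G) (walk k ω) + dist (walk k ω) (walk (k + 1) ω) := dist_triangle _ _ _
      _ ≤ ∑ j ∈ range (k + 1), dist (1 : G) (ω j) := by
        rw [sum_range_succ, hstep]; gcongr

lemma lengthDefect_nonneg (m n : ℕ) (ω : ℕ → G) : 0 ≤ lengthDefect m n ω := by
  have := dist_triangle (1 : G) (walk m ω) (walk (m + n) ω)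
  unfold lengthDefect; linarith

lemma lengthDefect_le_two_mul_dist (m n : ℕ) (ω : ℕ → G) :
    lengthDefect m n ω ≤ 2 * dist (1 : G) (walk m ω) := by
  have := dist_triangle_left (walk m ω) (walk (m + n) ω) (1 : G)
  unfold lengthDefect; linarith

lemma lengthDefect_rpow_le (hinv : ∀ g x y : G, dist (g * x) (g * y) = dist x y) {q : ℝ}
    (hq : 1 ≤ q) (m n : ℕ) (ω : ℕ → G) :
    lengthDefect m n ω ^ q ≤
      2 ^ q * ((m : ℝ) ^ (q - 1) * ∑ k ∈ range m, dist (1 : G) (ω k) ^ q) := by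
  have hsum : lengthDefect m n ω ≤ 2 * ∑ k ∈ range m, dist (1 : G) (ω k) :=
    (lengthDefect_le_two_mul_dist m n ω).trans (by gcongr; exact dist_one_walk_le_sum hinv m ω)
  calc lengthDefect m n ω ^ q ≤ (2 * ∑ k ∈ range m, dist (1 : G) (ω k)) ^ q := by
        gcongr; exact lengthDefect_nonneg m n ω
    _ = 2 ^ q * (∑ k ∈ range m, dist (1 : G) (ω k)) ^ q :=
        Real.mul_rpow zero_le_two (sum_nonneg fun _ _ => dist_nonneg)
    _ ≤ 2 ^ q * ((m : ℝ) ^ (q - 1) * ∑ k ∈ range m, dist (1 : G) (ω k) ^ q) := by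
        gcongr
        simpa using Real.rpow_sum_le_const_mul_sum_rpow_of_nonneg (range m) hq
          (f := fun k => dist (1 : G) (ω k)) fun _ _ => dist_nonneg

lemma abs_lengthDefect_rpow_le_of_sq_le (hinv : ∀ g x y : G, dist (g * x) (g * y) = dist x y)
    {p : ℝ} (hp : 1 ≤ p) {m n : ℕ} (hm : 1 ≤ m) {ω : ℕ → G}
    (hω : ((m + n : ℕ) : ℝ) ^ 2 ≤ |lengthDefect m n ω|) :
    |lengthDefect m n ω| ^ p ≤
      2 ^ (2 * p) / m * ∑ k ∈ range m, dist (1 : G) (ω k) ^ (2 * p) := by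
  rw [abs_of_nonneg (lengthDefect_nonneg m n ω)] at hω ⊢
  have hm0 : (0 : ℝ) < m := by exact_mod_cast hm
  have hmn : (m : ℝ) ≤ ((m + n : ℕ) : ℝ) := by exact_mod_cast m.le_add_right n
  have key : (m : ℝ) ^ (2 * p) * lengthDefect m n ω ^ p ≤
      2 ^ (2 * p) * ((m : ℝ) ^ (2 * p - 1) * ∑ k ∈ range m, dist (1 : G) (ω k) ^ (2 * p)) :=
    calc (m : ℝ) ^ (2 * p) * lengthDefect m n ω ^ p
        ≤ ((m + n : ℕ) : ℝ) ^ (2 * p) * lengthDefect m n ω ^ p := by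
          have := lengthDefect_nonneg m n ω
          gcongr
      _ ≤ lengthDefect m n ω ^ (2 * p) :=
          rpow_two_mul_mul_rpow_le_of_sq_le (by positivity) hω (by linarith)
      _ ≤ _ := lengthDefect_rpow_le hinv (by linarith) m n ω
  have hpow : 0 < (m : ℝ) ^ (2 * p) := by positivity
  refine le_of_mul_le_mul_left (key.trans_eq ?_) hpow
  rw [Real.rpow_sub_one hm0.ne']
  ring

end LengthDefect

theorem length_defect_truncated_moment_bound_general
    {G : Type*} [Group G] [Countable G] [MeasurableSpace G] [MeasurableSingletonClass G]
    [MetricSpace G] (hinv : ∀ g x y : G, dist (g * x) (g * y) = dist x y)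
    (μ : Measure G) (P : Measure (ℕ → G)) (hP : IsIIDProduct μ P)
    (p : ℝ) (hp : 1 ≤ p)
    (m n : ℕ) (hm : 1 ≤ m) :
    ∫⁻ ω in {ω : ℕ → G | ((m + n : ℕ) : ℝ) ^ 2 ≤ |lengthDefect m n ω|},
        ENNReal.ofReal (|lengthDefect m n ω| ^ p) ∂P ≤
      ENNReal.ofReal ((2 : ℝ) ^ (2 * p)) *
        ∫⁻ ω, ENNReal.ofReal (dist (1 : G) (ω 0) ^ (2 * p)) ∂P := by
  set f : G → ENNReal := fun x => ENNReal.ofReal (dist (1 : G) x ^ (2 * p))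
  have hf : Measurable f := measurable_of_countable f
  have hm0 : (0 : ℝ) < m := by exact_mod_cast hm
  calc ∫⁻ ω in {ω : ℕ → G | ((m + n : ℕ) : ℝ) ^ 2 ≤ |lengthDefect m n ω|},
        ENNReal.ofReal (|lengthDefect m n ω| ^ p) ∂P
      ≤ ∫⁻ ω, ENNReal.ofReal (2 ^ (2 * p) / m) * ∑ k ∈ range m, f (ω k) ∂P := by
        refine (setLIntegral_mono (by fun_prop) fun ω hω => ?_).trans
          (setLIntegral_le_lintegral _ _)
        rw [← ENNReal.ofReal_sum_of_nonneg fun _ _ => by positivity,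
          ← ENNReal.ofReal_mul (by positivity)]
        exact ENNReal.ofReal_le_ofReal (abs_lengthDefect_rpow_le_of_sq_le hinv hp hm hω)
    _ = ENNReal.ofReal (2 ^ (2 * p) / m * m) * ∫⁻ ω, f (ω 0) ∂P := by
        rw [lintegral_const_mul _ (by fun_prop), lintegral_sum_comp_apply hP.2.2 hf,
          ENNReal.ofReal_mul (by positivity), ENNReal.ofReal_natCast, mul_assoc]
    _ = ENNReal.ofReal ((2 : ℝ) ^ (2 * p)) * ∫⁻ ω, f (ω 0) ∂P := by
        rw [div_mul_cancel₀ _ hm0.ne']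

/-- **Truncated moment bound for the defect of the length cocycle:** if
`κ_{2p}(μ,d) = E[d(id,X₁)^{2p}] < ∞`, then for all `m, n ≥ 1`,
`E[|Ψ_{m,n}|^p · 1_{|Ψ_{m,n}| ≥ (m+n)²}] ≤ 2^{2p} κ_{2p}(μ,d)`. -/
theorem length_defect_truncated_moment_bound
    {G : Type*} [Group G] [Countable G] [MeasurableSpace G] [MeasurableSingletonClass G]
    [MetricSpace G] (hinv : ∀ g x y : G, dist (g * x) (g * y) = dist x y)
    (μ : Measure G) (P : Measure (ℕ → G)) (hP : IsIIDProduct μ P)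
    (p : ℝ) (hp : 1 ≤ p)
    (hκ : ∫⁻ ω, ENNReal.ofReal (dist (1 : G) (ω 0) ^ (2 * p)) ∂P < ⊤)
    (m n : ℕ) (hm : 1 ≤ m) (hn : 1 ≤ n) :
    ∫⁻ ω in {ω : ℕ → G | ((m + n : ℕ) : ℝ) ^ 2 ≤ |lengthDefect m n ω|},
        ENNReal.ofReal (|lengthDefect m n ω| ^ p) ∂P ≤
      ENNReal.ofReal ((2 : ℝ) ^ (2 * p)) *
        ∫⁻ ω, ENNReal.ofReal (dist (1 : G) (ω 0) ^ (2 * p)) ∂P :=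
  length_defect_truncated_moment_bound_general hinv μ P hP p hp m n hm
end
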